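/- For a finite set system S ⊆ {0,1}^X, the following are equivalent: (1) sstr(S) = str(S); (2) |sstr(S)| = |S|; (3) |S| = |str(S)|. -/

import Mathlib

open Finset

variable {α : Type*} [Fintype α] [DecidableEq α]

/-- `S` shatters `Y`: every assignment on `Y` extends to a member of `S`. -/
def shatters (S : Finset (α → Bool)) (Y : Finset α) : Prop :=
  ∀ f : α → Bool, ∃ s ∈ S, ∀ a ∈ Y, s a = f a

/-- `S` strongly shatters `Y`: some assignment off `Y` has all its `Y`-extensions in `S`. -/
def stronglyShatters (S : Finset (α → Bool)) (Y : Finset α) : Prop :=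
  ∃ g : α → Bool, ∀ f : α → Bool, (fun a => if a ∈ Y then f a else g a) ∈ S

open Classical in
/-- The family of shattered subsets. -/
noncomputable def strF (S : Finset (α → Bool)) : Finset (Finset α) :=
  Finset.univ.filter (fun Y => shatters S Y)

open Classical in
/-- The family of strongly shattered subsets. -/
noncomputable def sstrF (S : Finset (α → Bool)) : Finset (Finset α) :=
  Finset.univ.filter (fun Y => stronglyShatters S Y)

/-- Shattering-extremal: shattered = strongly shattered. -/
def SE (S : Finset (α → Bool)) : Prop :=
  ∀ Y : Finset α, shatters S Y ↔ stronglyShatters S Y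

/-! Split `S` along a coordinate `x` into the slices `S₀, S₁` (the points with `x = false`,
resp. `x = true`, with `x` forgotten). Then `str S` is `str (S₀ ∪ S₁)` together with `insert x`
applied to `str S₀ ∩ str S₁`, while `sstr S` is `sstr S₀ ∪ sstr S₁` together with `insert x`
applied to `sstr (S₀ ∩ S₁)`. As `|S₀ ∪ S₁| + |S₀ ∩ S₁| = |S|`, induction on the ground set gives
`|sstr S| ≤ |S| ≤ |str S|`. If either inequality is an equality, so is every inequality in the
inductive step; this makes the relevant slices extremal and identifies `str (S₀ ∪ S₁)` with
`str S₀ ∪ str S₁` (resp. `sstr (S₀ ∩ S₁)` with `sstr S₀ ∩ sstr S₁`), whence `str S ⊆ sstr S`. -/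

section Shattering

omit [Fintype α]

variable {S T : Finset (α → Bool)} {Y : Finset α}

theorem stronglyShatters.shatters (h : stronglyShatters S Y) : shatters S Y := by
  obtain ⟨g, hg⟩ := h
  intro f
  exact ⟨_, hg f, fun a ha => by simp [ha]⟩

omit [DecidableEq α] in
theorem shatters.mono (hST : S ⊆ T) (h : shatters S Y) : shatters T Y := by
  intro f
  obtain ⟨s, hs, hsf⟩ := h f
  exact ⟨s, hST hs, hsf⟩

theorem stronglyShatters.mono (hST : S ⊆ T) (h : stronglyShatters S Y) :
    stronglyShatters T Y := by
  obtain ⟨g, hg⟩ := h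
  exact ⟨g, fun f => hST (hg f)⟩

theorem stronglyShatters_iff_piecewise :
    stronglyShatters S Y ↔ ∃ g : α → Bool, ∀ f : α → Bool, Y.piecewise f g ∈ S :=
  Iff.rfl

omit [DecidableEq α] in
theorem shatters_empty_iff : shatters S ∅ ↔ S.Nonempty := by
  simp [shatters, Finset.Nonempty]

theorem stronglyShatters_empty_iff : stronglyShatters S ∅ ↔ S.Nonempty := by
  simp [stronglyShatters_iff_piecewise, Finset.Nonempty]

end Shattering

section SliceAt

open Function

variable {x : α} {S : Finset (α → Bool)} {Y E : Finset α}

/-- The subcube of `{0,1}^α` of points supported in `E`, a copy of `{0,1}^E`. -/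
def cube (E : Finset α) : Finset (α → Bool) :=
  univ.filter fun s => ∀ a ∉ E, s a = false

/-- The paper's `S_b = {s|_{X ∖ x} : s ∈ S, s x = b}`, kept inside `{0,1}^α` by setting the
`x`-coordinate to `false`. -/
def sliceAt (x : α) (b : Bool) (S : Finset (α → Bool)) : Finset (α → Bool) :=
  univ.filter fun t => t x = false ∧ update t x b ∈ S

theorem mem_sliceAt {b : Bool} {t : α → Bool} :
    t ∈ sliceAt x b S ↔ t x = false ∧ update t x b ∈ S := by
  simp [sliceAt]

theorem card_sliceAt (b : Bool) : #(sliceAt x b S) = #(S.filter (· x = b)) := by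
  refine card_nbij' (update · x b) (update · x false) ?_ ?_ ?_ ?_
  · intro t ht
    simp_all [mem_sliceAt]
  · intro s hs
    obtain ⟨hs, rfl⟩ := mem_filter.1 hs
    simpa [mem_sliceAt] using hs
  · intro t ht
    simp_all [mem_sliceAt]
  · intro s hs
    simp_all

theorem card_sliceAt_false_add_card_sliceAt_true :
    #(sliceAt x false S) + #(sliceAt x true S) = #S := by
  rw [card_sliceAt, card_sliceAt]
  convert card_filter_add_card_filter_not (s := S) (· x = false) using 3
  simp

theorem sliceAt_subset_cube (h : S ⊆ cube (insert x E)) (b : Bool) :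
    sliceAt x b S ⊆ cube E := by
  intro t ht
  rw [mem_sliceAt] at ht
  have := h ht.2
  simp only [cube, mem_filter, mem_univ, true_and, mem_insert, not_or] at this ⊢
  intro a ha
  by_cases hax : a = x
  · exact hax ▸ ht.1
  · simpa [hax] using this a ⟨hax, ha⟩

theorem update_mem_sliceAt {s : α → Bool} (hs : s ∈ S) :
    update s x false ∈ sliceAt x (s x) S :=
  mem_sliceAt.2 ⟨update_self .., by simpa⟩

theorem mem_sliceAt_union {t : α → Bool} :
    t ∈ sliceAt x false S ∪ sliceAt x true S ↔ ∃ b, t ∈ sliceAt x b S := by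
  simp [Bool.exists_bool]

theorem mem_sliceAt_inter {t : α → Bool} :
    t ∈ sliceAt x false S ∩ sliceAt x true S ↔ t x = false ∧ ∀ b, update t x b ∈ S := by
  simp only [mem_inter, mem_sliceAt, Bool.forall_bool]
  tauto

theorem shatters_sliceAt_union_iff (hx : x ∉ Y) :
    shatters (sliceAt x false S ∪ sliceAt x true S) Y ↔ shatters S Y := by
  have agree (t : α → Bool) (c : Bool) (a : α) (ha : a ∈ Y) : update t x c a = t a :=
    update_of_ne (ne_of_mem_of_not_mem ha hx) c t
  constructor
  · intro h f
    obtain ⟨t, ht, htf⟩ := h f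
    obtain ⟨b, hb⟩ := mem_sliceAt_union.1 ht
    exact ⟨update t x b, (mem_sliceAt.1 hb).2, fun a ha => (agree t b a ha).trans (htf a ha)⟩
  · intro h f
    obtain ⟨s, hs, hsf⟩ := h f
    exact ⟨update s x false, mem_sliceAt_union.2 ⟨_, update_mem_sliceAt hs⟩,
      fun a ha => (agree s false a ha).trans (hsf a ha)⟩

theorem shatters_insert_iff (hx : x ∉ Y) :
    shatters S (insert x Y) ↔ ∀ b, shatters (sliceAt x b S) Y := by
  constructor
  · intro h b f
    obtain ⟨s, hs, hsf⟩ := h (update f x b)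
    have hsx : s x = b := by simpa using hsf x (mem_insert_self x Y)
    refine ⟨update s x false, hsx ▸ update_mem_sliceAt hs, fun a ha => ?_⟩
    simpa [ne_of_mem_of_not_mem ha hx] using hsf a (mem_insert_of_mem ha)
  · intro h f
    obtain ⟨t, ht, htf⟩ := h (f x) f
    refine ⟨update t x (f x), (mem_sliceAt.1 ht).2, fun a ha => ?_⟩
    rcases mem_insert.1 ha with rfl | ha
    · simp
    · simpa [ne_of_mem_of_not_mem ha hx] using htf a ha

theorem stronglyShatters_iff_exists_sliceAt (hx : x ∉ Y) :
    stronglyShatters S Y ↔ ∃ b, stronglyShatters (sliceAt x b S) Y := by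
  simp only [stronglyShatters_iff_piecewise]
  constructor
  · rintro ⟨g, hg⟩
    refine ⟨g x, update g x false, fun f => mem_sliceAt.2 ⟨by simp [hx], ?_⟩⟩
    rw [← update_piecewise_of_notMem _ _ _ hx, update_idem, ← piecewise_eq_of_notMem Y f g hx,
      update_eq_self]
    exact hg f
  · rintro ⟨b, g, hg⟩
    refine ⟨update g x b, fun f => ?_⟩
    rw [← update_piecewise_of_notMem _ _ _ hx]
    exact (mem_sliceAt.1 (hg f)).2

theorem stronglyShatters_insert_iff (hx : x ∉ Y) :
    stronglyShatters S (insert x Y) ↔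
      stronglyShatters (sliceAt x false S ∩ sliceAt x true S) Y := by
  simp only [stronglyShatters_iff_piecewise]
  constructor
  · rintro ⟨g, hg⟩
    refine ⟨update g x false, fun f => mem_sliceAt_inter.2 ⟨by simp [hx], fun b => ?_⟩⟩
    convert hg (update f x b) using 1
    ext a
    rcases eq_or_ne a x with rfl | hax
    · simp
    · simp [hax, piecewise]
  · rintro ⟨g, hg⟩
    refine ⟨g, fun f => ?_⟩
    rw [piecewise_insert]
    exact (mem_sliceAt_inter.1 (hg f)).2 (f x)

end SliceAt

section PowersetInsert

omit [Fintype α]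

variable {x : α} {E : Finset α}

theorem filter_powerset_insert (p : Finset α → Prop) [DecidablePred p] :
    (insert x E).powerset.filter p =
      E.powerset.filter p ∪ (E.powerset.filter fun Y => p (insert x Y)).image (insert x) := by
  rw [powerset_insert, filter_union, filter_image]

theorem card_union_image_insert (hx : x ∉ E) {𝒜 ℬ : Finset (Finset α)} (h𝒜 : 𝒜 ⊆ E.powerset)
    (hℬ : ℬ ⊆ E.powerset) : #(𝒜 ∪ ℬ.image (insert x)) = #𝒜 + #ℬ := by
  have hxℬ : ∀ Y ∈ ℬ, x ∉ Y := fun Y hY hxY => hx (mem_powerset.1 (hℬ hY) hxY)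
  rw [card_union_of_disjoint, card_image_of_injOn]
  · exact fun Y hY Z hZ h => insert_erase_invOn.2.injOn (hxℬ Y hY) (hxℬ Z hZ) h
  · refine disjoint_left.2 fun Y hY hY' => ?_
    obtain ⟨Z, -, rfl⟩ := mem_image.1 hY'
    exact hx (mem_powerset.1 (h𝒜 hY) (mem_insert_self x Z))

end PowersetInsert

section ShatteredFamilies

open Classical

variable {x : α} {E : Finset α} {S T : Finset (α → Bool)}

noncomputable def strOn (E : Finset α) (S : Finset (α → Bool)) : Finset (Finset α) :=
  E.powerset.filter (shatters S)

noncomputable def sstrOn (E : Finset α) (S : Finset (α → Bool)) : Finset (Finset α) :=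
  E.powerset.filter (stronglyShatters S)

omit [Fintype α] [DecidableEq α] in
theorem strOn_mono (h : S ⊆ T) : strOn E S ⊆ strOn E T :=
  monotone_filter_right _ fun _ _ => shatters.mono h

omit [Fintype α] in
theorem sstrOn_mono (h : S ⊆ T) : sstrOn E S ⊆ sstrOn E T :=
  monotone_filter_right _ fun _ _ => stronglyShatters.mono h

theorem union_strOn_subset : strOn E S ∪ strOn E T ⊆ strOn E (S ∪ T) :=
  union_subset (strOn_mono subset_union_left) (strOn_mono subset_union_right)

theorem strOn_inter_subset : strOn E (S ∩ T) ⊆ strOn E S ∩ strOn E T :=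
  subset_inter (strOn_mono inter_subset_left) (strOn_mono inter_subset_right)

theorem union_sstrOn_subset : sstrOn E S ∪ sstrOn E T ⊆ sstrOn E (S ∪ T) :=
  union_subset (sstrOn_mono subset_union_left) (sstrOn_mono subset_union_right)

theorem sstrOn_inter_subset : sstrOn E (S ∩ T) ⊆ sstrOn E S ∩ sstrOn E T :=
  subset_inter (sstrOn_mono inter_subset_left) (sstrOn_mono inter_subset_right)

omit [Fintype α] in
theorem sstrOn_subset_strOn : sstrOn E S ⊆ strOn E S :=
  monotone_filter_right _ fun _ _ => stronglyShatters.shatters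

omit [Fintype α] in
theorem strOn_empty : strOn ∅ S = sstrOn ∅ S := by
  simp only [strOn, sstrOn, powerset_empty, filter_singleton, shatters_empty_iff,
    stronglyShatters_empty_iff]

theorem card_sstrOn_empty (h : S ⊆ cube ∅) : #(sstrOn ∅ S) = #S := by
  have hcube : cube (∅ : Finset α) = {fun _ => false} := by
    ext s
    simp [cube, funext_iff]
  rw [hcube, subset_singleton_iff] at h
  rcases h with rfl | rfl <;>
    simp [sstrOn, filter_singleton, stronglyShatters_empty_iff]

theorem strOn_insert (hx : x ∉ E) :
    strOn (insert x E) S = strOn E (sliceAt x false S ∪ sliceAt x true S) ∪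
      (strOn E (sliceAt x false S) ∩ strOn E (sliceAt x true S)).image (insert x) := by
  have hxY {Y : Finset α} (hY : Y ∈ E.powerset) : x ∉ Y := notMem_mono (mem_powerset.1 hY) hx
  rw [strOn, strOn, strOn, strOn, filter_powerset_insert, ← filter_and]
  congr 1
  · exact filter_congr fun Y hY => (shatters_sliceAt_union_iff (hxY hY)).symm
  · congr 1
    exact filter_congr fun Y hY => (shatters_insert_iff (hxY hY)).trans Bool.forall_bool

theorem sstrOn_insert (hx : x ∉ E) :
    sstrOn (insert x E) S = (sstrOn E (sliceAt x false S) ∪ sstrOn E (sliceAt x true S)) ∪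
      (sstrOn E (sliceAt x false S ∩ sliceAt x true S)).image (insert x) := by
  have hxY {Y : Finset α} (hY : Y ∈ E.powerset) : x ∉ Y := notMem_mono (mem_powerset.1 hY) hx
  rw [sstrOn, sstrOn, sstrOn, sstrOn, filter_powerset_insert, ← filter_or]
  congr 1
  · exact filter_congr fun Y hY => (stronglyShatters_iff_exists_sliceAt (hxY hY)).trans
      Bool.exists_bool
  · congr 1
    exact filter_congr fun Y hY => stronglyShatters_insert_iff (hxY hY)

omit [Fintype α] [DecidableEq α] in
theorem strOn_subset_powerset : strOn E S ⊆ E.powerset :=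
  filter_subset _ _

omit [Fintype α] in
theorem sstrOn_subset_powerset : sstrOn E S ⊆ E.powerset :=
  filter_subset _ _

theorem card_strOn_insert (hx : x ∉ E) :
    #(strOn (insert x E) S) = #(strOn E (sliceAt x false S ∪ sliceAt x true S)) +
      #(strOn E (sliceAt x false S) ∩ strOn E (sliceAt x true S)) := by
  rw [strOn_insert hx, card_union_image_insert hx strOn_subset_powerset
    (inter_subset_left.trans strOn_subset_powerset)]

theorem card_sstrOn_insert (hx : x ∉ E) :
    #(sstrOn (insert x E) S) = #(sstrOn E (sliceAt x false S) ∪ sstrOn E (sliceAt x true S)) +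
      #(sstrOn E (sliceAt x false S ∩ sliceAt x true S)) := by
  rw [sstrOn_insert hx, card_union_image_insert hx
    (union_subset sstrOn_subset_powerset sstrOn_subset_powerset) sstrOn_subset_powerset]

end ShatteredFamilies

section Sandwich

theorem card_le_card_strOn (E : Finset α) : ∀ S ⊆ cube E, #S ≤ #(strOn E S) := by
  induction E using Finset.induction_on with
  | empty => exact fun S hS => by rw [strOn_empty, card_sstrOn_empty hS]
  | insert x E hx ih =>
    intro S hS
    have hcard := card_sliceAt_false_add_card_sliceAt_true (x := x) (S := S)
    rw [card_strOn_insert hx]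
    set S₀ := sliceAt x false S
    set S₁ := sliceAt x true S
    have hS₀ : S₀ ⊆ cube E := sliceAt_subset_cube hS false
    have hS₁ : S₁ ⊆ cube E := sliceAt_subset_cube hS true
    have hunion := ih (S₀ ∪ S₁) (union_subset hS₀ hS₁)
    have hinter := ih (S₀ ∩ S₁) (inter_subset_left.trans hS₀)
    have hmono : #(strOn E (S₀ ∩ S₁)) ≤ #(strOn E S₀ ∩ strOn E S₁) :=
      card_le_card strOn_inter_subset
    have := card_union_add_card_inter S₀ S₁
    omega

theorem card_sstrOn_le (E : Finset α) : ∀ S ⊆ cube E, #(sstrOn E S) ≤ #S := by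
  induction E using Finset.induction_on with
  | empty => exact fun S hS => (card_sstrOn_empty hS).le
  | insert x E hx ih =>
    intro S hS
    have hcard := card_sliceAt_false_add_card_sliceAt_true (x := x) (S := S)
    rw [card_sstrOn_insert hx]
    set S₀ := sliceAt x false S
    set S₁ := sliceAt x true S
    have hS₀ : S₀ ⊆ cube E := sliceAt_subset_cube hS false
    have hS₁ : S₁ ⊆ cube E := sliceAt_subset_cube hS true
    have hunion := ih (S₀ ∪ S₁) (union_subset hS₀ hS₁)
    have hinter := ih (S₀ ∩ S₁) (inter_subset_left.trans hS₀)
    have hmono : #(sstrOn E S₀ ∪ sstrOn E S₁) ≤ #(sstrOn E (S₀ ∪ S₁)) :=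
      card_le_card union_sstrOn_subset
    have := card_union_add_card_inter S₀ S₁
    omega

end Sandwich

section Extremal

variable {x : α} {E : Finset α} {S : Finset (α → Bool)}

theorem strOn_insert_subset_sstrOn_insert (hx : x ∉ E)
    (hunion : strOn E (sliceAt x false S ∪ sliceAt x true S) ⊆
      sstrOn E (sliceAt x false S) ∪ sstrOn E (sliceAt x true S))
    (hinter : strOn E (sliceAt x false S) ∩ strOn E (sliceAt x true S) ⊆
      sstrOn E (sliceAt x false S ∩ sliceAt x true S)) :
    strOn (insert x E) S ⊆ sstrOn (insert x E) S := by
  rw [strOn_insert hx, sstrOn_insert hx]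
  exact union_subset_union hunion (image_subset_image hinter)

theorem strOn_subset_sstrOn_of_card_strOn_eq (E : Finset α) :
    ∀ S ⊆ cube E, #(strOn E S) = #S → strOn E S ⊆ sstrOn E S := by
  induction E using Finset.induction_on with
  | empty => exact fun S _ _ => (strOn_empty (S := S)).subset
  | insert x E hx ih =>
    intro S hS hS_card
    have hcard := card_sliceAt_false_add_card_sliceAt_true (x := x) (S := S)
    rw [card_strOn_insert hx] at hS_card
    set S₀ := sliceAt x false S
    set S₁ := sliceAt x true S
    have hS₀ : S₀ ⊆ cube E := sliceAt_subset_cube hS false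
    have hS₁ : S₁ ⊆ cube E := sliceAt_subset_cube hS true
    have hS₀₁ : S₀ ∩ S₁ ⊆ cube E := inter_subset_left.trans hS₀
    have hunion : strOn E S₀ ∪ strOn E S₁ ⊆ strOn E (S₀ ∪ S₁) := union_strOn_subset
    have hinter : strOn E (S₀ ∩ S₁) ⊆ strOn E S₀ ∩ strOn E S₁ := strOn_inter_subset
    have := card_le_card hunion
    have := card_le_card hinter
    have := card_le_card_strOn E S₀ hS₀
    have := card_le_card_strOn E S₁ hS₁
    have := card_le_card_strOn E (S₀ ∩ S₁) hS₀₁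
    have := card_le_card_strOn E (S₀ ∪ S₁) (union_subset hS₀ hS₁)
    have := card_union_add_card_inter (strOn E S₀) (strOn E S₁)
    have := card_union_add_card_inter S₀ S₁
    -- `#S ≤ #(str S₀) + #(str S₁) ≤ #(str (S₀ ∪ S₁)) + #(str S₀ ∩ str S₁) = #S` and
    -- `#S ≤ #(str (S₀ ∪ S₁)) + #(str (S₀ ∩ S₁)) ≤ #(str (S₀ ∪ S₁)) + #(str S₀ ∩ str S₁) = #S`
    -- are both tight.
    refine strOn_insert_subset_sstrOn_insert hx ?_ ?_
    · rw [← eq_of_subset_of_card_le hunion (by omega)]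
      exact union_subset_union (ih S₀ hS₀ (by omega)) (ih S₁ hS₁ (by omega))
    · rw [← eq_of_subset_of_card_le hinter (by omega)]
      exact ih (S₀ ∩ S₁) hS₀₁ (by omega)

theorem strOn_subset_sstrOn_of_card_sstrOn_eq (E : Finset α) :
    ∀ S ⊆ cube E, #(sstrOn E S) = #S → strOn E S ⊆ sstrOn E S := by
  induction E using Finset.induction_on with
  | empty => exact fun S _ _ => (strOn_empty (S := S)).subset
  | insert x E hx ih =>
    intro S hS hS_card
    have hcard := card_sliceAt_false_add_card_sliceAt_true (x := x) (S := S)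
    rw [card_sstrOn_insert hx] at hS_card
    set S₀ := sliceAt x false S
    set S₁ := sliceAt x true S
    have hS₀ : S₀ ⊆ cube E := sliceAt_subset_cube hS false
    have hS₁ : S₁ ⊆ cube E := sliceAt_subset_cube hS true
    have hS₀₁ : S₀ ∪ S₁ ⊆ cube E := union_subset hS₀ hS₁
    have hunion : sstrOn E S₀ ∪ sstrOn E S₁ ⊆ sstrOn E (S₀ ∪ S₁) := union_sstrOn_subset
    have hinter : sstrOn E (S₀ ∩ S₁) ⊆ sstrOn E S₀ ∩ sstrOn E S₁ := sstrOn_inter_subset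
    have := card_le_card hunion
    have := card_le_card hinter
    have := card_sstrOn_le E S₀ hS₀
    have := card_sstrOn_le E S₁ hS₁
    have := card_sstrOn_le E (S₀ ∪ S₁) hS₀₁
    have := card_sstrOn_le E (S₀ ∩ S₁) (inter_subset_left.trans hS₀)
    have := card_union_add_card_inter (sstrOn E S₀) (sstrOn E S₁)
    have := card_union_add_card_inter S₀ S₁
    -- `#S = #(sstr S₀ ∪ sstr S₁) + #(sstr (S₀ ∩ S₁))` is at most both
    -- `#(sstr (S₀ ∪ S₁)) + #(sstr (S₀ ∩ S₁)) ≤ #S` and `#(sstr S₀) + #(sstr S₁) ≤ #S`.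
    refine strOn_insert_subset_sstrOn_insert hx ?_ ?_
    · rw [eq_of_subset_of_card_le hunion (by omega)]
      exact ih (S₀ ∪ S₁) hS₀₁ (by omega)
    · rw [eq_of_subset_of_card_le hinter (by omega)]
      exact inter_subset_inter (ih S₀ hS₀ (by omega)) (ih S₁ hS₁ (by omega))

end Extremal

theorem stmt5 (S : Finset (α → Bool)) :
    (sstrF S = strF S ↔ (sstrF S).card = S.card) ∧
    ((sstrF S).card = S.card ↔ S.card = (strF S).card) := by
  have hstr : strOn univ S = strF S := by rw [strOn, strF, powerset_univ]
  have hsstr : sstrOn univ S = sstrF S := by rw [sstrOn, sstrF, powerset_univ]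
  rw [← hstr, ← hsstr]
  have hS : S ⊆ cube univ := fun s _ => by simp [cube]
  have hle := card_sstrOn_le univ S hS
  have hge := card_le_card_strOn univ S hS
  have of_card_sstrOn_eq (h : #(sstrOn univ S) = #S) : sstrOn univ S = strOn univ S :=
    sstrOn_subset_strOn.antisymm (strOn_subset_sstrOn_of_card_sstrOn_eq univ S hS h)
  have of_card_strOn_eq (h : #S = #(strOn univ S)) : sstrOn univ S = strOn univ S :=
    sstrOn_subset_strOn.antisymm (strOn_subset_sstrOn_of_card_strOn_eq univ S hS h.symm)
  refine ⟨⟨fun h => ?_, of_card_sstrOn_eq⟩, fun h => ?_, fun h => ?_⟩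
  · have := congrArg card h
    omega
  · have := congrArg card (of_card_sstrOn_eq h)
    omega
  · have := congrArg card (of_card_strOn_eq h)
    omega
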